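/- In the algebra with generators x, y and relation yx = xy − (1/2)x², for all ℓ, n ≥ 0 one has y^ℓ x^n = ∑_{k=0}^{ℓ} binom(ℓ,k) (−1)^k ([n]^{[k]} / 2^k) x^{n+k} y^{ℓ−k}, where [n]^{[k]} = n(n+1)⋯(n+k−1) is the raising factorial. -/

import Mathlib

/-!
Left multiplication by `y` sends `x^m y^j` to `x^m y^{j+1} - (m/2) x^{m+1} y^j`. Writing
`f k j = c_k x^{n+k} y^j` with `c_k = ∏_{i<k} (-(n+i)/2)`, this reads
`y · f k j = f k (j+1) + f (k+1) j`, so iterating `y` on `f 0 0 = x^n` expands exactly like a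
binomial power, by Pascal's rule.
-/

open Finset

/-- The raising factorial `[t]^{[k]} = t(t+1)⋯(t+k-1)`. -/
noncomputable def raise {K : Type*} [Field K] (t : K) (k : ℕ) : K :=
  ∏ i ∈ Finset.range k, (t + i)

lemma raise_succ {K : Type*} [Field K] (t : K) (k : ℕ) :
    raise t (k + 1) = raise t k * (t + k) :=
  prod_range_succ _ _

lemma mul_pow_eq_pow_mul_sub_of_mul_eq_mul_sub {R A : Type*} [CommRing R] [Ring A]
    [Algebra R A] {x y : A} {c : R} (h : y * x = x * y - c • x ^ 2) (m : ℕ) :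
    y * x ^ m = x ^ m * y - ((m : R) * c) • x ^ (m + 1) := by
  induction m with
  | zero => simp
  | succ m ih =>
    calc y * x ^ (m + 1) = (y * x ^ m) * x := by rw [pow_succ, mul_assoc]
      _ = x ^ m * (x * y - c • x ^ 2) - ((m : R) * c) • x ^ (m + 2) := by
        rw [ih, sub_mul, mul_assoc, h, smul_mul_assoc, ← pow_succ]
      _ = x ^ (m + 1) * y - (((m + 1 : ℕ) : R) * c) • x ^ (m + 2) := by
        rw [mul_sub, mul_smul_comm, ← mul_assoc, ← pow_succ, ← pow_add, sub_sub, ← add_smul]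
        push_cast
        ring_nf

lemma pow_mul_eq_sum_choose_nsmul {A : Type*} [Semiring A] (y : A) (f : ℕ → ℕ → A)
    (hf : ∀ k j, y * f k j = f k (j + 1) + f (k + 1) j) (ℓ : ℕ) :
    y ^ ℓ * f 0 0 = ∑ k ∈ range (ℓ + 1), ℓ.choose k • f k (ℓ - k) := by
  induction ℓ with
  | zero => simp
  | succ ℓ ih =>
    rw [sum_choose_succ_nsmul, pow_succ', mul_assoc, ih, mul_sum, ← sum_add_distrib]
    refine sum_congr rfl fun k hk => ?_
    rw [mul_smul_comm, hf, smul_add, Nat.sub_add_comm (mem_range_succ_iff.mp hk)]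

theorem stmt2 (K : Type*) [Field K]
    (A : Type*) [Ring A] [Algebra K A] (x y : A)
    (hrel : y * x = x * y - (1/2 : K) • x ^ 2) (ℓ n : ℕ) :
    y ^ ℓ * x ^ n = ∑ k ∈ Finset.range (ℓ + 1),
      ((ℓ.choose k : K) * (-1) ^ k * raise (n : K) k / 2 ^ k) •
        (x ^ (n + k) * y ^ (ℓ - k)) := by
  set c : ℕ → K := fun k => (-1) ^ k * raise (n : K) k / 2 ^ k with hc
  have hc_succ : ∀ k, c (k + 1) = -(c k * (((n + k : ℕ) : K) * (1 / 2))) := fun k => by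
    simp only [hc, raise_succ]
    push_cast
    ring
  set f : ℕ → ℕ → A := fun k j => c k • (x ^ (n + k) * y ^ j) with hf
  have hy : ∀ k j, y * f k j = f k (j + 1) + f (k + 1) j := fun k j => by
    simp only [hf]
    rw [mul_smul_comm, ← mul_assoc, mul_pow_eq_pow_mul_sub_of_mul_eq_mul_sub hrel, sub_mul,
      smul_mul_assoc, mul_assoc, ← pow_succ', smul_sub, smul_smul, hc_succ, neg_smul,
      ← sub_eq_add_neg, ← add_assoc]
  have hf₀ : f 0 0 = x ^ n := by simp [hf, hc, raise]
  rw [← hf₀, pow_mul_eq_sum_choose_nsmul y f hy]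
  refine sum_congr rfl fun k _ => ?_
  rw [mul_assoc, mul_div_assoc, mul_smul, Nat.cast_smul_eq_nsmul]
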